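/- (Kreisselmeier extended regression.) Let ψ : ℝ → EuclideanSpace ℝ (Fin n) be continuous, θ ∈ EuclideanSpace ℝ (Fin n), and ρ > 0. Suppose Φ : ℝ → Matrix (Fin n) (Fin n) ℝ and Y : ℝ → EuclideanSpace ℝ (Fin n) are differentiable with Φ'(t) = −ρ • Φ(t) + vecMulVec (ψ(t)) (ψ(t)) and Y'(t) = −ρ • Y(t) + ⟪ψ(t), θ⟫ • ψ(t) for all t ≥ 0, with Φ(0) = 0 and Y(0) = 0. Then Y(t) = Φ(t) *ᵥ θ for all t ≥ 0. -/

import Mathlib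

/-! The error `e = Y - Φ θ` obeys `ė = -ρ e`: the forcing terms cancel because
`ψ ψᵀ θ = ⟪ψ, θ⟫ ψ`. As `e 0 = 0`, Grönwall's inequality forces `e = 0` on `[0, ∞)`. -/

open Matrix
open scoped RealInnerProductSpace

attribute [local instance] Matrix.normedAddCommGroup Matrix.normedSpace

/-- The underlying plain vector of a point of `EuclideanSpace ℝ (Fin n)`. -/
def ev {n : ℕ} (x : EuclideanSpace ℝ (Fin n)) : Fin n → ℝ :=
  (WithLp.equiv 2 (Fin n → ℝ)) x

theorem eq_zero_of_hasDerivAt_apply_self_of_eq_zero {E : Type*} [NormedAddCommGroup E]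
    [NormedSpace ℝ E] (A : E →L[ℝ] E) {g : ℝ → E} {a : ℝ}
    (hg : ∀ t ≥ a, HasDerivAt g (A (g t)) t) (ha : g a = 0) : ∀ t ≥ a, g t = 0 := by
  intro t ht
  refine eq_zero_of_abs_deriv_le_mul_abs_self_of_eq_zero_right (K := ‖A‖) (b := t)
    (fun s hs => (hg s hs.1).continuousAt.continuousWithinAt)
    (fun s hs => (hg s hs.1).hasDerivWithinAt) ha (fun s _ => A.le_opNorm _) t ⟨ht, le_rfl⟩

theorem HasDerivAt.mulVec_const {m n : Type*} [Fintype m] [Fintype n]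
    {Φ : ℝ → Matrix m n ℝ} {Φ' : Matrix m n ℝ} {t : ℝ} (v : n → ℝ)
    (hΦ : HasDerivAt Φ Φ' t) : HasDerivAt (fun s => Φ s *ᵥ v) (Φ' *ᵥ v) t :=
  ((mulVec.addMonoidHomLeft v).toRealLinearMap (continuous_id.matrix_mulVec continuous_const)
    |>.hasFDerivAt.comp_hasDerivAt t hΦ :)

theorem HasDerivAt.ev {n : ℕ} {Y : ℝ → EuclideanSpace ℝ (Fin n)}
    {Y' : EuclideanSpace ℝ (Fin n)} {t : ℝ} (hY : HasDerivAt Y Y' t) :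
    HasDerivAt (fun s => ev (Y s)) (ev Y') t :=
  (PiLp.hasFDerivAt_ofLp 2 (Y t)).comp_hasDerivAt t hY

theorem inner_eq_ev_dotProduct {n : ℕ} (x y : EuclideanSpace ℝ (Fin n)) :
    ⟪x, y⟫ = ev x ⬝ᵥ ev y := by
  rw [EuclideanSpace.inner_eq_star_dotProduct, star_trivial, dotProduct_comm]
  rfl

theorem stmt15_general {n : ℕ} (ψ : ℝ → EuclideanSpace ℝ (Fin n))
    (θ : EuclideanSpace ℝ (Fin n)) (ρ : ℝ)
    (Φ : ℝ → Matrix (Fin n) (Fin n) ℝ)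
    (Y : ℝ → EuclideanSpace ℝ (Fin n))
    (hΦ : Differentiable ℝ Φ) (hY : Differentiable ℝ Y)
    (hΦd : ∀ t ≥ (0:ℝ), deriv Φ t = (-ρ) • Φ t + vecMulVec (ev (ψ t)) (ev (ψ t)))
    (hYd : ∀ t ≥ (0:ℝ), deriv Y t = (-ρ) • Y t + ⟪ψ t, θ⟫ • ψ t)
    (hΦ0 : Φ 0 = 0) (hY0 : Y 0 = 0) :
    ∀ t ≥ (0:ℝ), ev (Y t) = Φ t *ᵥ ev θ := by
  have herr : ∀ t ≥ (0:ℝ), HasDerivAt (fun s => ev (Y s) - Φ s *ᵥ ev θ)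
      ((-ρ) • (ev (Y t) - Φ t *ᵥ ev θ)) t := by
    intro t ht
    have hΦt := (hΦ t).hasDerivAt.congr_deriv (hΦd t ht)
    have hYt := (hY t).hasDerivAt.congr_deriv (hYd t ht)
    refine (hYt.ev.sub (hΦt.mulVec_const (ev θ))).congr_deriv ?_
    rw [add_mulVec, smul_mulVec, vecMulVec_mulVec, inner_eq_ev_dotProduct]
    simp only [smul_sub, ev, WithLp.equiv_apply, WithLp.ofLp_add, WithLp.ofLp_smul, op_smul_eq_smul]
    abel
  intro t ht
  exact sub_eq_zero.mp <| eq_zero_of_hasDerivAt_apply_self_of_eq_zero ((-ρ) • .id ℝ _) herr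
    (by simp [hY0, hΦ0, ev]) t ht

/-- Kreisselmeier extended regression: the LTV filter
`Φ̇ = −ρΦ + ψψᵀ`, `Ẏ = −ρY + ψ⟪ψ,θ⟫` with zero initial conditions yields the
extended linear regression equation `Y = Φ θ`. -/
theorem stmt15 {n : ℕ} (ψ : ℝ → EuclideanSpace ℝ (Fin n)) (hψ : Continuous ψ)
    (θ : EuclideanSpace ℝ (Fin n)) (ρ : ℝ) (hρ : 0 < ρ)
    (Φ : ℝ → Matrix (Fin n) (Fin n) ℝ)
    (Y : ℝ → EuclideanSpace ℝ (Fin n))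
    (hΦ : Differentiable ℝ Φ) (hY : Differentiable ℝ Y)
    (hΦd : ∀ t ≥ (0:ℝ), deriv Φ t = (-ρ) • Φ t + vecMulVec (ev (ψ t)) (ev (ψ t)))
    (hYd : ∀ t ≥ (0:ℝ), deriv Y t = (-ρ) • Y t + ⟪ψ t, θ⟫ • ψ t)
    (hΦ0 : Φ 0 = 0) (hY0 : Y 0 = 0) :
    ∀ t ≥ (0:ℝ), ev (Y t) = Φ t *ᵥ ev θ :=
  stmt15_general ψ θ ρ Φ Y hΦ hY hΦd hYd hΦ0 hY0
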